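/- For p ≥ 0 define sin_p(x) := Σ_{k=0}^∞ (-1)^k x^{2k+1} / (2(3+p)·4(5+p)⋯2k(2k+1+p)). Then this power series has infinite radius of convergence, and h(x) := sin_{n-3}(λ^{1/2}|x|)/(λ^{1/2}|x|) is a smooth rotation-invariant solution of Δh + λh = 0 on ℝ^n \ {0} for any λ > 0. -/

import Mathlib

open Real

/-- The `k`-th term of the series defining `sin_p`. -/
noncomputable def sinpTerm (p : ℝ) (k : ℕ) (x : ℝ) : ℝ :=
  (-1) ^ k * x ^ (2 * k + 1) /
    ∏ i ∈ Finset.range k, (2 * ((i : ℝ) + 1) * (2 * ((i : ℝ) + 1) + 1 + p))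

/-- `sin_p(x) = Σ_{k≥0} (-1)^k x^{2k+1} / (2(3+p)4(5+p)⋯2k(2k+1+p))`. -/
noncomputable def sinp (p : ℝ) (x : ℝ) : ℝ := ∑' k, sinpTerm p k x

/-- Partial derivative in the `i`-th coordinate direction. -/
noncomputable def coordDeriv {n : ℕ} (i : Fin n)
    (f : EuclideanSpace ℝ (Fin n) → ℝ) : EuclideanSpace ℝ (Fin n) → ℝ :=
  fun x => fderiv ℝ f x (EuclideanSpace.single i 1)

set_option maxHeartbeats 1000000

namespace HelmAux

/-- The summability predicate for coefficient sequences. -/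
def Sble (b : ℕ → ℝ) : Prop := ∀ r : ℝ, 0 < r → Summable fun k => |b k| * r ^ k

/-- Shift operator corresponding to termwise differentiation. -/
def sh (b : ℕ → ℝ) : ℕ → ℝ := fun k => ((k : ℝ) + 1) * b (k + 1)

lemma sble_of_bound {b : ℕ → ℝ} (hb : ∀ k, |b k| ≤ 1 / (4 ^ k * (k.factorial : ℝ))) :
    Sble b := by
  intro r hr
  have hsum : Summable fun k : ℕ => (r / 4) ^ k / (k.factorial : ℝ) :=
    Real.summable_pow_div_factorial (r / 4)
  refine Summable.of_nonneg_of_le (fun k => by positivity) (fun k => ?_) hsum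
  have h4 : (0:ℝ) < 4 ^ k * (k.factorial : ℝ) := by positivity
  calc |b k| * r ^ k ≤ (1 / (4 ^ k * (k.factorial : ℝ))) * r ^ k := by
        gcongr; exact hb k
    _ = (r / 4) ^ k / (k.factorial : ℝ) := by
        rw [div_pow]; field_simp

lemma Sble.shift {b : ℕ → ℝ} (hb : Sble b) : Sble (sh b) := by
  intro r hr
  have h2 : Summable fun k : ℕ => |b k| * (2 * r) ^ k := hb (2 * r) (by linarith)
  have h2' : Summable fun k : ℕ => |b (k + 1)| * (2 * r) ^ (k + 1) :=
    (summable_nat_add_iff 1).2 h2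
  refine Summable.of_nonneg_of_le (fun k => by positivity) (fun k => ?_)
    (h2'.mul_left (1 / r))
  have hk : ((k : ℝ) + 1) ≤ 2 ^ (k + 1) := by
    have h := (Nat.lt_two_pow_self (n := k + 1)).le
    exact_mod_cast h
  have habs : |HelmAux.sh b k| = ((k : ℝ) + 1) * |b (k + 1)| := by
    rw [HelmAux.sh, abs_mul, abs_of_nonneg (by positivity : (0:ℝ) ≤ (k : ℝ) + 1)]
  rw [habs]
  have hrk : (0:ℝ) < r ^ k := by positivity
  have : (2 * r) ^ (k + 1) = 2 ^ (k + 1) * (r * r ^ k) := by ring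
  rw [this]
  have hb1 : (0:ℝ) ≤ |b (k + 1)| := abs_nonneg _
  calc ((k : ℝ) + 1) * |b (k + 1)| * r ^ k ≤ 2 ^ (k+1) * |b (k + 1)| * r ^ k := by gcongr
    _ = 1 / r * (|b (k + 1)| * (2 ^ (k + 1) * (r * r ^ k))) := by field_simp

lemma Sble.summable {b : ℕ → ℝ} (hb : Sble b) (t : ℝ) :
    Summable fun k => b k * t ^ k := by
  have h := hb (|t| + 1) (by positivity)
  refine Summable.of_abs (Summable.of_nonneg_of_le (fun k => abs_nonneg _) (fun k => ?_) h)
  rw [abs_mul, abs_pow]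
  have hpow : |t| ^ k ≤ (|t| + 1) ^ k := pow_le_pow_left₀ (abs_nonneg t) (by linarith) k
  exact mul_le_mul_of_nonneg_left hpow (abs_nonneg _)


/-- The denominator product. -/
noncomputable def D (p : ℝ) (k : ℕ) : ℝ :=
  ∏ i ∈ Finset.range k, (2 * ((i : ℝ) + 1) * (2 * ((i : ℝ) + 1) + 1 + p))

lemma D_succ (p : ℝ) (k : ℕ) :
    D p (k + 1) = D p k * (2 * ((k : ℝ) + 1) * (2 * ((k : ℝ) + 1) + 1 + p)) :=
  Finset.prod_range_succ _ k

lemma D_pos {p : ℝ} (hp : -1 ≤ p) (k : ℕ) : 0 < D p k := by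
  refine Finset.prod_pos fun i _ => ?_
  have h1 : (0:ℝ) < (i : ℝ) + 1 := by positivity
  nlinarith

lemma D_ge {p : ℝ} (hp : -1 ≤ p) (k : ℕ) :
    4 ^ k * (k.factorial : ℝ) ≤ D p k := by
  induction k with
  | zero => simp [D]
  | succ k ih =>
    rw [D_succ, pow_succ, Nat.factorial_succ]
    push_cast
    have h1 : (0:ℝ) < (k : ℝ) + 1 := by positivity
    have h2 : 4 * ((k : ℝ) + 1) ≤ 2 * ((k : ℝ) + 1) * (2 * ((k : ℝ) + 1) + 1 + p) := by
      nlinarith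
    have h3 : (0:ℝ) < 4 ^ k * (k.factorial : ℝ) := by positivity
    calc 4 ^ k * 4 * (((k:ℝ) + 1) * (k.factorial : ℝ))
        = (4 ^ k * (k.factorial : ℝ)) * (4 * ((k:ℝ) + 1)) := by ring
      _ ≤ D p k * (2 * ((k : ℝ) + 1) * (2 * ((k : ℝ) + 1) + 1 + p)) := by
          exact mul_le_mul ih h2 (by positivity) (le_trans h3.le ih |>.trans (le_refl _) |> fun _ => (D_pos hp k).le) 
  
/-- The coefficient sequence. -/
noncomputable def co (p : ℝ) : ℕ → ℝ := fun k => (-1) ^ k / D p k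

lemma abs_co {p : ℝ} (hp : -1 ≤ p) (k : ℕ) : |co p k| = 1 / D p k := by
  rw [co, abs_div, abs_pow, abs_neg, abs_one, one_pow, abs_of_pos (D_pos hp k)]

lemma sble_co {p : ℝ} (hp : -1 ≤ p) : Sble (co p) := by
  refine sble_of_bound fun k => ?_
  rw [abs_co hp]
  have h3 : (0:ℝ) < 4 ^ k * (k.factorial : ℝ) := by positivity
  exact one_div_le_one_div_of_le h3 (D_ge hp k)


/-- Termwise differentiation of the power series. -/
lemma Sble.hasDerivAt {b : ℕ → ℝ} (hb : Sble b) (t : ℝ) :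
    HasDerivAt (fun u => ∑' k, b k * u ^ k) (∑' k, sh b k * t ^ k) t := by
  set r : ℝ := |t| + 1 with hr_def
  have hr : 0 < r := by positivity
  have ht : t ∈ Metric.ball (0 : ℝ) r := by
    simp only [Metric.mem_ball, dist_zero_right, Real.norm_eq_abs, hr_def]
    linarith
  refine hasDerivAt_of_tendstoLocallyUniformlyOn (l := Filter.atTop)
    (f := fun N (u : ℝ) => ∑ k ∈ Finset.range (N + 1), b k * u ^ k)
    (f' := fun N (u : ℝ) => ∑ k ∈ Finset.range N, sh b k * u ^ k)
    (g := fun u => ∑' k, b k * u ^ k)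
    (g' := fun u => ∑' k, sh b k * u ^ k)
    Metric.isOpen_ball ?_ ?_ ?_ ht
  · have hbound : ∀ (k : ℕ) (u : ℝ), u ∈ Metric.ball (0 : ℝ) r →
        ‖sh b k * u ^ k‖ ≤ |sh b k| * r ^ k := by
      intro k u hu
      rw [Real.norm_eq_abs, abs_mul, abs_pow]
      have hu' : |u| ≤ r := by
        simp only [Metric.mem_ball, dist_zero_right, Real.norm_eq_abs] at hu
        linarith
      exact mul_le_mul_of_nonneg_left (pow_le_pow_left₀ (abs_nonneg u) hu' k) (abs_nonneg _)
    exact (tendstoUniformlyOn_tsum_nat (hb.shift r hr) hbound).tendstoLocallyUniformlyOn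
  · filter_upwards with N u _
    have hterm : ∀ k ∈ Finset.range (N + 1),
        HasDerivAt (fun u : ℝ => b k * u ^ k) (b k * ((k : ℝ) * u ^ (k - 1))) u :=
      fun k _ => (hasDerivAt_pow k u).const_mul (b k)
    have hsum := HasDerivAt.fun_sum hterm
    convert hsum using 1
    rw [Finset.sum_range_succ' (fun k => b k * ((k : ℝ) * u ^ (k - 1))) N]
    simp only [Nat.cast_zero, zero_mul, mul_zero, add_zero, Nat.cast_succ, Nat.add_sub_cancel]
    refine Finset.sum_congr rfl fun k _ => ?_
    rw [sh]
    push_cast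
    ring
  · intro u _
    have := ((hb.summable u).hasSum.tendsto_sum_nat).comp (Filter.tendsto_add_atTop_nat 1)
    exact this

lemma Sble.contDiff {b : ℕ → ℝ} (hb : Sble b) :
    ContDiff ℝ (⊤ : ℕ∞) (fun t : ℝ => ∑' k, b k * t ^ k) := by
  have hrad : (FormalMultilinearSeries.ofScalars ℝ b).radius = ⊤ := by
    refine FormalMultilinearSeries.radius_eq_top_of_summable_norm _ fun r => ?_
    simp only [FormalMultilinearSeries.ofScalars_norm, Real.norm_eq_abs]
    have h := hb ((r : ℝ) + 1) (by positivity)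
    refine Summable.of_nonneg_of_le (fun k => by positivity) (fun k => ?_) h
    have hpow : ((r : ℝ)) ^ k ≤ ((r : ℝ) + 1) ^ k :=
      pow_le_pow_left₀ r.coe_nonneg (by linarith) k
    exact mul_le_mul_of_nonneg_left hpow (abs_nonneg _)
  have hball : HasFPowerSeriesOnBall (FormalMultilinearSeries.ofScalars ℝ b).sum
      (FormalMultilinearSeries.ofScalars ℝ b) 0 ⊤ := by
    have := (FormalMultilinearSeries.ofScalars ℝ b).hasFPowerSeriesOnBall
      (by rw [hrad]; exact ENNReal.zero_lt_top)
    rwa [hrad] at this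
  have hAnal : AnalyticOnNhd ℝ (FormalMultilinearSeries.ofScalars ℝ b).sum Set.univ := by
    have := hball.analyticOnNhd
    rwa [Metric.emetric_ball_top] at this
  have heq : (fun t : ℝ => ∑' k, b k * t ^ k)
      = (FormalMultilinearSeries.ofScalars ℝ b).sum := by
    funext t
    rw [← FormalMultilinearSeries.ofScalarsSum, FormalMultilinearSeries.ofScalars_sum_eq]
    simp [smul_eq_mul]
  rw [heq]
  exact hAnal.contDiff


lemma hp_of_hn {n : ℕ} (hn : 2 ≤ n) : (-1 : ℝ) ≤ (n : ℝ) - 3 := by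
  have : (2 : ℝ) ≤ (n : ℝ) := by exact_mod_cast hn
  linarith

lemma co_rec {n : ℕ} (hn : 2 ≤ n) (k : ℕ) :
    2 * ((k : ℝ) + 1) * (2 * (k : ℝ) + (n : ℝ)) * co ((n : ℝ) - 3) (k + 1)
      = - co ((n : ℝ) - 3) k := by
  have hp := hp_of_hn hn
  have hn2 : (2 : ℝ) ≤ (n : ℝ) := by exact_mod_cast hn
  have hD : D ((n : ℝ) - 3) k ≠ 0 := (D_pos hp k).ne'
  have hfac : 2 * ((k : ℝ) + 1) * (2 * ((k : ℝ) + 1) + 1 + ((n : ℝ) - 3)) ≠ 0 := by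
    have h1 : (0:ℝ) < (k : ℝ) + 1 := by positivity
    nlinarith
  have hne : (2 * (k : ℝ) + (n : ℝ)) ≠ 0 := by
    have : (0:ℝ) ≤ (k : ℝ) := k.cast_nonneg
    intro h0; linarith
  rw [co, co, D_succ]
  field_simp
  have hne' : (k:ℝ) * 2 + (n:ℝ) ≠ 0 := by rw [mul_comm]; exact hne
  have e : ((k:ℝ) * 2 + (n:ℝ))⁻¹ * ((k:ℝ) * 2 + (n:ℝ)) = 1 := inv_mul_cancel₀ hne'
  linear_combination (-(-1:ℝ) ^ k) * e

lemma ode {n : ℕ} (hn : 2 ≤ n) (u : ℝ) :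
    4 * u * (∑' k, sh (sh (co ((n : ℝ) - 3))) k * u ^ k)
      + 2 * (n : ℝ) * (∑' k, sh (co ((n : ℝ) - 3)) k * u ^ k)
      + (∑' k, co ((n : ℝ) - 3) k * u ^ k) = 0 := by
  have hp := hp_of_hn hn
  set b := co ((n : ℝ) - 3) with hb_def
  have hb : Sble b := sble_co hp
  have hG : HasSum (fun k => b k * u ^ k) (∑' k, b k * u ^ k) := (hb.summable u).hasSum
  have hG1 : HasSum (fun k => sh b k * u ^ k) (∑' k, sh b k * u ^ k) :=
    (hb.shift.summable u).hasSum
  have hG2 : HasSum (fun k => sh (sh b) k * u ^ k) (∑' k, sh (sh b) k * u ^ k) :=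
    (hb.shift.shift.summable u).hasSum
  set e : ℕ → ℝ := fun k => (k : ℝ) * ((k : ℝ) + 1) * b (k + 1) * u ^ k with he_def
  have hshift : (fun k => u * (sh (sh b) k * u ^ k)) = fun k => e (k + 1) := by
    funext k
    simp only [he_def, sh]
    push_cast
    ring
  have hT : HasSum (fun k => e (k + 1)) (u * (∑' k, sh (sh b) k * u ^ k)) := by
    rw [← hshift]; exact hG2.mul_left u
  have he : HasSum e (u * (∑' k, sh (sh b) k * u ^ k)) := by
    have := (hasSum_nat_add_iff (f := e) 1).mp hT
    simpa [he_def] using this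
  have hcomb : HasSum
      (fun k => 4 * e k + 2 * (n : ℝ) * (sh b k * u ^ k) + b k * u ^ k)
      (4 * (u * (∑' k, sh (sh b) k * u ^ k))
        + 2 * (n : ℝ) * (∑' k, sh b k * u ^ k) + (∑' k, b k * u ^ k)) :=
    ((he.mul_left 4).add (hG1.mul_left (2 * (n : ℝ)))).add hG
  have hzero : (fun k => 4 * e k + 2 * (n : ℝ) * (sh b k * u ^ k) + b k * u ^ k)
      = fun _ => (0 : ℝ) := by
    funext k
    have hkey := co_rec hn k
    simp only [he_def, sh, hb_def]
    push_cast
    linear_combination (u ^ k) * hkey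
  rw [hzero] at hcomb
  have h0 : (4 * (u * (∑' k, sh (sh b) k * u ^ k))
      + 2 * (n : ℝ) * (∑' k, sh b k * u ^ k) + (∑' k, b k * u ^ k)) = 0 :=
    hcomb.unique hasSum_zero
  linarith [h0]


end HelmAux

open HelmAux in
lemma sinpTerm_eq (p : ℝ) (k : ℕ) (x : ℝ) :
    sinpTerm p k x = x * (co p k * (x ^ 2) ^ k) := by
  have hx : x ^ (2 * k + 1) = x * (x ^ 2) ^ k := by
    rw [pow_add, pow_mul, pow_one]; ring
  simp only [sinpTerm, HelmAux.co, HelmAux.D, hx]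
  ring

open HelmAux in
lemma sinp_eq (p : ℝ) (x : ℝ) :
    sinp p x = x * ∑' k, co p k * (x ^ 2) ^ k := by
  rw [sinp, ← tsum_mul_left]
  exact tsum_congr fun k => sinpTerm_eq p k x

namespace HelmAux

variable {n : ℕ}

/-- The radial extension of the power series as a function on Euclidean space. -/
noncomputable def Phi (b : ℕ → ℝ) (lam : ℝ) (n : ℕ) : EuclideanSpace ℝ (Fin n) → ℝ :=
  fun y => ∑' k, b k * (lam * ‖y‖ ^ 2) ^ k

lemma q_hasFDerivAt (lam : ℝ) (y : EuclideanSpace ℝ (Fin n)) :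
    HasFDerivAt (fun y : EuclideanSpace ℝ (Fin n) => lam * ‖y‖ ^ 2)
      ((2 * lam) • (innerSL ℝ y)) y := by
  have h1 := ((hasFDerivAt_id (𝕜 := ℝ) y).inner ℝ (hasFDerivAt_id y)).const_mul lam
  simp only [real_inner_self_eq_norm_sq, id_eq] at h1
  have h2 : (lam • ((fderivInnerCLM ℝ (y, y)).comp
      ((ContinuousLinearMap.id ℝ (EuclideanSpace ℝ (Fin n))).prod
        (ContinuousLinearMap.id ℝ (EuclideanSpace ℝ (Fin n))))))
      = (2 * lam) • (innerSL ℝ y) := by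
    ext v
    simp only [ContinuousLinearMap.smul_apply, ContinuousLinearMap.coe_comp',
      Function.comp_apply, ContinuousLinearMap.prod_apply, ContinuousLinearMap.coe_id',
      id_eq, fderivInnerCLM_apply, innerSL_apply_apply, smul_eq_mul]
    rw [real_inner_comm v y]
    ring
  rw [← h2]
  exact h1

lemma phi_hasFDerivAt {b : ℕ → ℝ} (hb : Sble b) (lam : ℝ) (y : EuclideanSpace ℝ (Fin n)) :
    HasFDerivAt (Phi b lam n)
      ((Phi (sh b) lam n y) • ((2 * lam) • (innerSL ℝ y))) y := by
  have hg : HasDerivAt (fun u => ∑' k, b k * u ^ k)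
      (∑' k, sh b k * (lam * ‖y‖ ^ 2) ^ k) (lam * ‖y‖ ^ 2) :=
    hb.hasDerivAt (lam * ‖y‖ ^ 2)
  exact hg.comp_hasFDerivAt y (q_hasFDerivAt lam y)

lemma inner_single (y : EuclideanSpace ℝ (Fin n)) (i : Fin n) :
    (inner ℝ y (EuclideanSpace.single i (1 : ℝ)) : ℝ) = y i := by
  rw [EuclideanSpace.inner_single_right]
  simp

lemma coordDeriv_phi {b : ℕ → ℝ} (hb : Sble b) (lam : ℝ) (i : Fin n) :
    coordDeriv i (Phi b lam n)
      = fun y => Phi (sh b) lam n y * (2 * lam * (y i)) := by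
  funext y
  rw [coordDeriv, (phi_hasFDerivAt hb lam y).fderiv]
  simp only [ContinuousLinearMap.smul_apply, innerSL_apply_apply, smul_eq_mul]
  rw [inner_single y i]

lemma coordDeriv2_phi {b : ℕ → ℝ} (hb : Sble b) (lam : ℝ) (i : Fin n)
    (y : EuclideanSpace ℝ (Fin n)) :
    coordDeriv i (coordDeriv i (Phi b lam n)) y
      = Phi (sh (sh b)) lam n y * (2 * lam * (y i)) ^ 2
        + Phi (sh b) lam n y * (2 * lam) := by
  rw [coordDeriv_phi hb lam i, coordDeriv]
  have h1 : HasFDerivAt (fun y : EuclideanSpace ℝ (Fin n) => Phi (sh b) lam n y)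
      ((Phi (sh (sh b)) lam n y) • ((2 * lam) • (innerSL ℝ y))) y :=
    phi_hasFDerivAt hb.shift lam y
  have h2 : HasFDerivAt (fun y : EuclideanSpace ℝ (Fin n) => 2 * lam * (y i))
      ((2 * lam) • (EuclideanSpace.proj i : EuclideanSpace ℝ (Fin n) →L[ℝ] ℝ)) y := by
    have h3 := (EuclideanSpace.proj (𝕜 := ℝ) i).hasFDerivAt (x := y)
    exact h3.const_mul (2 * lam)
  rw [(h1.fun_mul h2).fderiv]
  simp only [ContinuousLinearMap.add_apply, ContinuousLinearMap.smul_apply,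
    innerSL_apply_apply, smul_eq_mul]
  rw [inner_single]
  have hproj : (EuclideanSpace.proj (𝕜 := ℝ) i) (EuclideanSpace.single i (1 : ℝ)) = 1 := by
    simp
  rw [hproj]
  ring

lemma contDiff_phi {b : ℕ → ℝ} (hb : Sble b) (lam : ℝ) :
    ContDiff ℝ (⊤ : ℕ∞) (Phi b lam n) :=
  hb.contDiff.comp (contDiff_const.mul (contDiff_norm_sq ℝ))

lemma sum_sq_eq_norm_sq (y : EuclideanSpace ℝ (Fin n)) :
    ∑ i, (y i) ^ 2 = ‖y‖ ^ 2 := by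
  have h : ∑ i, ‖y i‖ ^ 2 = ∑ i, (y i) ^ 2 := by
    simp [Real.norm_eq_abs, sq_abs]
  rw [EuclideanSpace.norm_eq, Real.sq_sqrt (by positivity)]
  exact h.symm

end HelmAux

open HelmAux

/-- The power series of `sin_p` converges for every `x` (infinite radius
of convergence), and `h(x) = sin_{n-3}(√λ |x|)/(√λ |x|)` is a smooth solution of
`Δh + λh = 0` on `ℝ^n \ {0}` for any `λ > 0` (it is rotation invariant, being a
function of `|x|` only). -/
theorem helmholtz_radial_solution
    (n : ℕ) (hn : 2 ≤ n) (lam : ℝ) (hlam : 0 < lam)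
    (h : EuclideanSpace ℝ (Fin n) → ℝ)
    (hh : ∀ x, h x = sinp ((n : ℝ) - 3) (Real.sqrt lam * ‖x‖) / (Real.sqrt lam * ‖x‖)) :
    (∀ p : ℝ, 0 ≤ p → ∀ x : ℝ, Summable (fun k => sinpTerm p k x)) ∧
    ContDiffOn ℝ (⊤ : ℕ∞) h {x | x ≠ 0} ∧
    ∀ x : EuclideanSpace ℝ (Fin n), x ≠ 0 →
      (∑ i, coordDeriv i (coordDeriv i h) x) + lam * h x = 0 := by

  have hp : (-1 : ℝ) ≤ (n : ℝ) - 3 := hp_of_hn hn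
  set b : ℕ → ℝ := co ((n : ℝ) - 3) with hb_def
  have hb : Sble b := sble_co hp
  -- the function h agrees with `Phi b lam n` away from the origin
  have hkey : ∀ y : EuclideanSpace ℝ (Fin n), y ≠ 0 → h y = Phi b lam n y := by
    intro y hy
    have hs : Real.sqrt lam * ‖y‖ ≠ 0 :=
      mul_ne_zero (Real.sqrt_pos.mpr hlam).ne' (norm_ne_zero_iff.mpr hy)
    have hsq : (Real.sqrt lam * ‖y‖) ^ 2 = lam * ‖y‖ ^ 2 := by
      rw [mul_pow, Real.sq_sqrt hlam.le]
    rw [hh y, sinp_eq, hsq, mul_comm, mul_div_assoc, div_self hs, mul_one]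
    rfl
  refine ⟨?_, ?_, ?_⟩
  · -- summability
    intro p hp0 x
    have hp' : (-1 : ℝ) ≤ p := by linarith
    have : (fun k => sinpTerm p k x) = fun k => x * (co p k * (x ^ 2) ^ k) := by
      funext k; exact sinpTerm_eq p k x
    rw [this]
    exact ((sble_co hp').summable (x ^ 2)).mul_left x
  · -- smoothness
    exact ((contDiff_phi hb lam).contDiffOn).congr fun y hy => hkey y hy
  · -- the PDE
    intro x hx
    have hopen : IsOpen {y : EuclideanSpace ℝ (Fin n) | y ≠ 0} := isOpen_ne
    -- first derivatives agree on the open set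
    have hd1 : ∀ y : EuclideanSpace ℝ (Fin n), y ≠ 0 → ∀ i,
        coordDeriv i h y = coordDeriv i (Phi b lam n) y := by
      intro y hy i
      have hev : h =ᶠ[nhds y] Phi b lam n :=
        Filter.eventuallyEq_of_mem (hopen.mem_nhds hy) hkey
      rw [coordDeriv, coordDeriv, hev.fderiv_eq]
    -- second derivatives agree at x
    have hd2 : ∀ i, coordDeriv i (coordDeriv i h) x
        = coordDeriv i (coordDeriv i (Phi b lam n)) x := by
      intro i
      have hev : coordDeriv i h =ᶠ[nhds x] coordDeriv i (Phi b lam n) :=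
        Filter.eventuallyEq_of_mem (hopen.mem_nhds hx) (fun y hy => hd1 y hy i)
      rw [coordDeriv, coordDeriv, hev.fderiv_eq]
    have hode := ode hn (lam * ‖x‖ ^ 2)
    have h2 : ∀ i, coordDeriv i (coordDeriv i (Phi b lam n)) x
        = Phi (sh (sh b)) lam n x * (2 * lam * (x i)) ^ 2
          + Phi (sh b) lam n x * (2 * lam) := fun i => coordDeriv2_phi hb lam i x
    calc (∑ i, coordDeriv i (coordDeriv i h) x) + lam * h x
        = (∑ i, (Phi (sh (sh b)) lam n x * (2 * lam * (x i)) ^ 2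
            + Phi (sh b) lam n x * (2 * lam))) + lam * Phi b lam n x := by
          rw [hkey x hx]
          congr 1
          exact Finset.sum_congr rfl fun i _ => by rw [hd2 i, h2 i]
      _ = Phi (sh (sh b)) lam n x * (4 * lam ^ 2 * ∑ i, (x i) ^ 2)
            + (n : ℝ) * (Phi (sh b) lam n x * (2 * lam)) + lam * Phi b lam n x := by
          rw [Finset.sum_add_distrib, Finset.sum_const, Finset.card_univ, Fintype.card_fin,
            ← Finset.mul_sum]
          simp only [nsmul_eq_mul]
          congr 2
          simp only [Finset.mul_sum]
          exact Finset.sum_congr rfl fun i _ => by ring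
      _ = lam * (4 * (lam * ‖x‖ ^ 2) * Phi (sh (sh b)) lam n x
            + 2 * (n : ℝ) * Phi (sh b) lam n x + Phi b lam n x) := by
          rw [sum_sq_eq_norm_sq]
          ring
      _ = 0 := by
          rw [Phi, Phi, Phi]
          rw [hode]
          ring
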